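/- arXiv:2308.05902 — 6 statements merged into one kernel-verified Lean document; each statement's English description precedes it below -/
import Mathlib

section
/- Weak duality for the fair allocation program. Let W_OPT be the supremum, over all feasible decision tuples (x_1,…,x_T) (i.e. each x_t ∈ {0,1}^I with ∑_{i∈I} x_{t,i} = K, and the cumulative exposure vector e := ∑_{t=1}^T Mᵀx_t satisfies e ≤ γ componentwise), of the objective (1/T)∑_{t=1}^T s_tᵀx_t + λ·min_{p∈P} (e_p/γ_p). Then for every μ ∈ ℝ^P with r*(−μ) < ∞, one has W_OPT ≤ g*(Mμ) + λ·r*(−μ); consequently W_OPT ≤ inf over all such μ of g*(Mμ) + λ·r*(−μ). -/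
open Finset Matrix

/-! The pairing `∑ₜ ⟪Mμ, xₜ⟫ = ⟪μ, e⟫`, with `e = ∑ₜ Mᵀxₜ`, splits the objective into
`(utility − ∑ₜ ⟪Mμ, xₜ⟫) + λ (min_p e_p/γ_p + ⟪μ, e⟫/λ)`. The first bracket belongs to the set
whose supremum is `g*(Mμ)`, which is bounded because there are only finitely many binary
tuples; the second belongs to the set whose supremum is `r*(−μ)`, bounded by dual feasibility. -/

lemma finite_setOf_forall_eq_zero_or_eq_one {ι κ R : Type*} [Finite ι] [Finite κ] [Zero R] [One R] :
    {y : ι → κ → R | ∀ t i, y t i = 0 ∨ y t i = 1}.Finite := by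
  have hpi : {y : ι → κ → R | ∀ t i, y t i = 0 ∨ y t i = 1}
      = Set.univ.pi fun _ => Set.univ.pi fun _ => ({0, 1} : Set R) := by
    ext y
    simp
  rw [hpi]
  exact Set.Finite.pi fun _ => Set.Finite.pi fun _ => Set.toFinite _

lemma bddAbove_setOf_exists_binary {ι κ : Type*} [Finite ι] [Finite κ]
    (Q : (ι → κ → ℝ) → Prop) (f : (ι → κ → ℝ) → ℝ) :
    BddAbove {w : ℝ | ∃ y : ι → κ → ℝ, (∀ t i, y t i = 0 ∨ y t i = 1) ∧ Q y ∧ w = f y} :=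
  (finite_setOf_forall_eq_zero_or_eq_one.image f).bddAbove.mono <| by
    rintro w ⟨y, hy, -, rfl⟩
    exact ⟨y, hy, rfl⟩

lemma sum_sum_mulVec_mul {ι I P R : Type*} [Fintype ι] [Fintype I] [Fintype P] [CommSemiring R]
    (M : Matrix I P R) (μ : P → R) (x : ι → I → R) :
    ∑ t, ∑ i, (M *ᵥ μ) i * x t i = ∑ p, μ p * ∑ t, ∑ i, M i p * x t i := by
  calc ∑ t, ∑ i, (M *ᵥ μ) i * x t i = ∑ t, ∑ p, μ p * ∑ i, M i p * x t i := by
        refine sum_congr rfl fun t _ => ?_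
        simp only [mulVec, dotProduct, sum_mul, mul_sum]
        rw [sum_comm]
        exact sum_congr rfl fun _ _ => sum_congr rfl fun _ _ => by ring
    _ = ∑ p, μ p * ∑ t, ∑ i, M i p * x t i := by
        rw [sum_comm]
        simp only [mul_sum]

theorem weak_duality_fair_allocation_general
    {I P : Type*} [Fintype I] [Fintype P] [Nonempty P]
    (T K : ℕ)
    (lam : ℝ) (hlam : 0 < lam)
    (γ : P → ℝ)
    (s : Fin T → I → ℝ)
    (M : Matrix I P ℝ)
    -- the conjugate g* of the user-utility part
    (gstar : (I → ℝ) → ℝ)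
    (hgstar : ∀ c : I → ℝ, gstar c = sSup {w : ℝ | ∃ y : Fin T → I → ℝ,
      (∀ t i, y t i = 0 ∨ y t i = 1) ∧ (∀ t, ∑ i, y t i = (K : ℝ)) ∧
      w = ∑ t, ((∑ i, s t i * y t i) / (T : ℝ) - ∑ i, c i * y t i)})
    -- the conjugate r*(-·) of the max-min regularizer
    (rstar : (P → ℝ) → ℝ)
    (hrstar : ∀ μ : P → ℝ, rstar μ = sSup {w : ℝ | ∃ e : P → ℝ, (∀ p, e p ≤ γ p) ∧
      w = (Finset.univ.inf' Finset.univ_nonempty fun p => e p / γ p)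
        + (∑ p, μ p * e p) / lam})
    -- a dual-feasible μ : r*(-μ) < ∞
    (μ : P → ℝ)
    (hμfeas : BddAbove {w : ℝ | ∃ e : P → ℝ, (∀ p, e p ≤ γ p) ∧
      w = (Finset.univ.inf' Finset.univ_nonempty fun p => e p / γ p)
        + (∑ p, μ p * e p) / lam})
    -- a feasible primal decision tuple
    (x : Fin T → I → ℝ)
    (hx01 : ∀ t i, x t i = 0 ∨ x t i = 1)
    (hxK : ∀ t, ∑ i, x t i = (K : ℝ))
    (hres : ∀ p, ∑ t, ∑ i, M i p * x t i ≤ γ p) :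
    (1 / (T : ℝ)) * (∑ t, ∑ i, s t i * x t i)
      + lam * (Finset.univ.inf' Finset.univ_nonempty fun p =>
          (∑ t, ∑ i, M i p * x t i) / γ p)
      ≤ gstar (M.mulVec μ) + lam * rstar μ := by
  set e : P → ℝ := fun p => ∑ t, ∑ i, M i p * x t i
  set m := univ.inf' univ_nonempty fun p => e p / γ p
  have hg : ∑ t, ((∑ i, s t i * x t i) / T - ∑ i, (M *ᵥ μ) i * x t i) ≤ gstar (M *ᵥ μ) := by
    rw [hgstar]
    exact le_csSup (bddAbove_setOf_exists_binary _ _) ⟨x, hx01, hxK, rfl⟩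
  have hr : m + (∑ p, μ p * e p) / lam ≤ rstar μ := by
    rw [hrstar]
    exact le_csSup hμfeas ⟨e, hres, rfl⟩
  rw [sum_sub_distrib, sum_sum_mulVec_mul, ← sum_div] at hg
  calc (1 / (T : ℝ)) * (∑ t, ∑ i, s t i * x t i) + lam * m
      = ((∑ t, ∑ i, s t i * x t i) / T - ∑ p, μ p * e p)
          + lam * (m + (∑ p, μ p * e p) / lam) := by
        field_simp
        ring
    _ ≤ gstar (M *ᵥ μ) + lam * rstar μ := add_le_add hg (mul_le_mul_of_nonneg_left hr hlam.le)

/-- Weak duality for the fair allocation program: for every dual-feasible `μ`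
(i.e. `r*(-μ) < ∞`, expressed as boundedness of the defining set), every feasible
decision tuple `x` has objective value at most `g*(Mμ) + λ·r*(-μ)`;
hence `W_OPT ≤ g*(Mμ) + λ·r*(-μ)` and consequently `W_OPT` is at most the
infimum of the right-hand side over all such `μ`. -/
theorem weak_duality_fair_allocation
    {I P : Type*} [Fintype I] [Fintype P] [Nonempty I] [Nonempty P]
    (T K : ℕ) (hT : 1 ≤ T) (hK1 : 1 ≤ K) (hK2 : K ≤ Fintype.card I)
    (lam : ℝ) (hlam : 0 < lam)
    (γ : P → ℝ) (hγ : ∀ p, 0 < γ p)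
    (s : Fin T → I → ℝ)
    (M : Matrix I P ℝ) (hM : ∀ i p, M i p = 0 ∨ M i p = 1)
    -- the conjugate g* of the user-utility part
    (gstar : (I → ℝ) → ℝ)
    (hgstar : ∀ c : I → ℝ, gstar c = sSup {w : ℝ | ∃ y : Fin T → I → ℝ,
      (∀ t i, y t i = 0 ∨ y t i = 1) ∧ (∀ t, ∑ i, y t i = (K : ℝ)) ∧
      w = ∑ t, ((∑ i, s t i * y t i) / (T : ℝ) - ∑ i, c i * y t i)})
    -- the conjugate r*(-·) of the max-min regularizer
    (rstar : (P → ℝ) → ℝ)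
    (hrstar : ∀ μ : P → ℝ, rstar μ = sSup {w : ℝ | ∃ e : P → ℝ, (∀ p, e p ≤ γ p) ∧
      w = (Finset.univ.inf' Finset.univ_nonempty fun p => e p / γ p)
        + (∑ p, μ p * e p) / lam})
    -- a dual-feasible μ : r*(-μ) < ∞
    (μ : P → ℝ)
    (hμfeas : BddAbove {w : ℝ | ∃ e : P → ℝ, (∀ p, e p ≤ γ p) ∧
      w = (Finset.univ.inf' Finset.univ_nonempty fun p => e p / γ p)
        + (∑ p, μ p * e p) / lam})
    -- a feasible primal decision tuple
    (x : Fin T → I → ℝ)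
    (hx01 : ∀ t i, x t i = 0 ∨ x t i = 1)
    (hxK : ∀ t, ∑ i, x t i = (K : ℝ))
    (hres : ∀ p, ∑ t, ∑ i, M i p * x t i ≤ γ p) :
    (1 / (T : ℝ)) * (∑ t, ∑ i, s t i * x t i)
      + lam * (Finset.univ.inf' Finset.univ_nonempty fun p =>
          (∑ t, ∑ i, M i p * x t i) / γ p)
      ≤ gstar (M.mulVec μ) + lam * rstar μ :=
  weak_duality_fair_allocation_general T K lam hlam γ s M gstar hgstar rstar hrstar μ hμfeas x hx01
    hxK hres
end

section
/- Characterization of the dual feasible region. For every μ ∈ ℝ^P, the conjugate value r*(−μ) is finite if and only if for every subset S ⊆ P one has ∑_{p∈S} γ_p μ_p ≥ −λ. -/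
/-!
In the coordinates `x_p = e_p / γ_p ≤ 1` and `c_p = γ_p μ_p` the objective is, up to the factor
`1 / λ`, `λ · min x + ∑ c_p x_p`. If some `S` has `c(S) < -λ`, putting `x = t` on `S` and `x = 1`
elsewhere gives `t (λ + c(S)) + c(Sᶜ)`, unbounded as `t → -∞`. Otherwise the objective is
maximised at `x = 1`: with `m = min x ≤ 1` and `N = {c < 0}`, it is at most
`m (λ + c(N)) + c(Nᶜ) ≤ λ + c(N) + c(Nᶜ)`.
-/

open Finset

section MinPlusLinear

variable {ι : Type*} [Fintype ι]

theorem sum_mul_le_of_forall_le {c x : ι → ℝ} {m : ℝ} (hm : ∀ i, m ≤ x i) (hx : ∀ i, x i ≤ 1) :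
    ∑ i, c i * x i ≤ m * ∑ i with c i < 0, c i + ∑ i with ¬c i < 0, c i := by
  rw [← sum_filter_add_sum_filter_not univ (c · < 0), mul_sum]
  refine add_le_add (sum_le_sum fun i hi => ?_) (sum_le_sum fun i hi => ?_)
  · rw [mul_comm m]
    exact mul_le_mul_of_nonpos_left (hm i) (mem_filter.1 hi).2.le
  · exact mul_le_of_le_one_right (not_lt.1 (mem_filter.1 hi).2) (hx i)

variable [Nonempty ι]

theorem mul_inf'_add_sum_mul_le {lam : ℝ} {c : ι → ℝ} (hc : ∀ S : Finset ι, -lam ≤ ∑ i ∈ S, c i)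
    {x : ι → ℝ} (hx : ∀ i, x i ≤ 1) :
    lam * univ.inf' univ_nonempty x + ∑ i, c i * x i ≤ lam + ∑ i, c i := by
  set m := univ.inf' univ_nonempty x
  have hm : ∀ i, m ≤ x i := fun i => inf'_le _ (mem_univ i)
  have hm1 : m ≤ 1 := (hm (Classical.arbitrary ι)).trans (hx _)
  have hneg := hc {i | c i < 0}
  have := sum_mul_le_of_forall_le (c := c) hm hx
  have hsplit := sum_filter_add_sum_filter_not univ (c · < 0) c
  nlinarith [mul_nonneg (sub_nonneg.2 hm1) (neg_le_iff_add_nonneg.1 hneg)]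

theorem exists_lt_mul_inf'_add_sum_mul {lam : ℝ} (hlam : 0 ≤ lam) {c : ι → ℝ} {S : Finset ι}
    (hS : ∑ i ∈ S, c i < -lam) (B : ℝ) :
    ∃ x : ι → ℝ, (∀ i, x i ≤ 1) ∧ B < lam * univ.inf' univ_nonempty x + ∑ i, c i * x i := by
  classical
  obtain ⟨j, hj⟩ : S.Nonempty := nonempty_iff_ne_empty.2 fun h => by simp [h] at hS; linarith
  have ha : lam + ∑ i ∈ S, c i < 0 := by linarith
  set b := ∑ i ∈ Sᶜ, c i
  set t := min 1 ((B - b) / (lam + ∑ i ∈ S, c i)) - 1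
  have ht1 : t ≤ 1 := by linarith [min_le_left 1 ((B - b) / (lam + ∑ i ∈ S, c i))]
  have hBt : B - b < t * (lam + ∑ i ∈ S, c i) :=
    (lt_div_iff_of_neg ha).1 (by linarith [min_le_right 1 ((B - b) / (lam + ∑ i ∈ S, c i))])
  refine ⟨fun i => if i ∈ S then t else 1, fun i => by dsimp only; split_ifs <;> simp [ht1], ?_⟩
  have hinf : univ.inf' univ_nonempty (fun i => if i ∈ S then t else 1) = t :=
    le_antisymm ((inf'_le _ (mem_univ j)).trans_eq (if_pos hj))
      (le_inf' _ _ fun i _ => by split_ifs <;> simp [ht1])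
  have hsum : ∑ i, c i * (if i ∈ S then t else 1) = t * ∑ i ∈ S, c i + b := by
    rw [← sum_add_sum_compl S, mul_sum]
    congr 1
    · exact sum_congr rfl fun i hi => by rw [if_pos hi, mul_comm]
    · exact sum_congr rfl fun i hi => by rw [if_neg (mem_compl.1 hi), mul_one]
  rw [hinf, hsum]
  linarith

end MinPlusLinear

section DualObjective

variable {P : Type*} [Fintype P] [Nonempty P]

-- `r*(-μ)` is the supremum of `dualObjective lam γ μ e` over `e ≤ γ`.
noncomputable def dualObjective (lam : ℝ) (γ μ e : P → ℝ) : ℝ :=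
  univ.inf' univ_nonempty (fun p => e p / γ p) + (∑ p, μ p * e p) / lam

theorem dualObjective_eq {lam : ℝ} (hlam : lam ≠ 0) {γ : P → ℝ} (hγ : ∀ p, γ p ≠ 0) (μ e : P → ℝ) :
    dualObjective lam γ μ e = (lam * univ.inf' univ_nonempty (fun p => e p / γ p)
      + ∑ p, γ p * μ p * (e p / γ p)) / lam := by
  rw [dualObjective, add_div, mul_div_cancel_left₀ _ hlam]
  congr 2
  exact sum_congr rfl fun p _ => by field_simp [hγ p]

end DualObjective

/-- Characterization of the dual feasible region: `r*(-μ)` is finite (the defining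
set is bounded above; it is always nonempty, e.g. take `e = γ`) if and only if
`∑_{p∈S} γ_p μ_p ≥ -λ` for every subset `S ⊆ P`. -/
theorem dual_feasible_region_characterization
    {P : Type*} [Fintype P] [Nonempty P]
    (lam : ℝ) (hlam : 0 < lam)
    (γ : P → ℝ) (hγ : ∀ p, 0 < γ p)
    (μ : P → ℝ) :
    BddAbove {w : ℝ | ∃ e : P → ℝ, (∀ p, e p ≤ γ p) ∧
      w = (Finset.univ.inf' Finset.univ_nonempty fun p => e p / γ p)
        + (∑ p, μ p * e p) / lam}
    ↔ ∀ S : Finset P, -lam ≤ ∑ p ∈ S, γ p * μ p := by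
  have hγ0 : ∀ p, γ p ≠ 0 := fun p => (hγ p).ne'
  change BddAbove {w | ∃ e, (∀ p, e p ≤ γ p) ∧ w = dualObjective lam γ μ e} ↔ _
  constructor
  · rintro ⟨B, hB⟩ S
    by_contra! hS
    obtain ⟨x, hx, hBx⟩ := exists_lt_mul_inf'_add_sum_mul hlam.le hS (lam * B)
    have hle := hB ⟨fun p => γ p * x p, fun p => mul_le_of_le_one_right (hγ p).le (hx p), rfl⟩
    simp only [dualObjective_eq hlam.ne' hγ0, mul_div_cancel_left₀ _ (hγ0 _)] at hle
    rw [div_le_iff₀' hlam] at hle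
    linarith
  · refine fun h => ⟨(lam + ∑ p, γ p * μ p) / lam, ?_⟩
    rintro _ ⟨e, he, rfl⟩
    rw [dualObjective_eq hlam.ne' hγ0]
    exact div_le_div_of_nonneg_right
      (mul_inf'_add_sum_mul_le h fun p => (div_le_one (hγ p)).2 (he p)) hlam.le
end

section
/- Closed form of the conjugate of the max-min regularizer on the feasible region. Suppose μ ∈ ℝ^P satisfies ∑_{p∈S} γ_p μ_p ≥ −λ for every subset S ⊆ P. Then r*(−μ) = μᵀγ/λ + 1, and the supremum defining r*(−μ) is attained at e = γ. -/
/-!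
For `e ≤ γ` put `m = minₚ eₚ/γₚ ≤ 1`, so that `cₚ = (γₚ - eₚ)/γₚ` lies in `[0, 1 - m]`.
Then `μᵀγ - μᵀe = ∑ₚ cₚ (γₚ μₚ)` is at least `(1 - m)` times the sum of the negative
terms `γₚ μₚ`, which is `≥ -λ` by hypothesis. Hence the objective at `e` is at most
`m + (μᵀγ + (1 - m) λ)/λ = μᵀγ/λ + 1`, its value at `e = γ`.
-/

open Finset

section

variable {R ι : Type*} [CommRing R] [LinearOrder R] [IsStrictOrderedRing R]

theorem neg_mul_le_sum_mul_of_forall_subset_le_sum {s : Finset ι} {a c : ι → R} {t lam : R}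
    (ht : 0 ≤ t) (hc₀ : ∀ i ∈ s, 0 ≤ c i) (hct : ∀ i ∈ s, c i ≤ t)
    (ha : ∀ S ⊆ s, -lam ≤ ∑ i ∈ S, a i) :
    -(t * lam) ≤ ∑ i ∈ s, c i * a i := by
  classical
  set N := s.filter (fun i => a i < 0)
  calc -(t * lam) = t * -lam := by ring
    _ ≤ t * ∑ i ∈ N, a i := mul_le_mul_of_nonneg_left (ha N (filter_subset _ _)) ht
    _ = ∑ i ∈ N, t * a i := mul_sum _ _ _
    _ ≤ ∑ i ∈ N, c i * a i := sum_le_sum fun i hi => by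
      obtain ⟨his, hai⟩ := mem_filter.mp hi
      nlinarith [hct i his]
    _ ≤ ∑ i ∈ s, c i * a i := sum_le_sum_of_subset_of_nonneg (filter_subset _ _) fun i his hiN =>
      mul_nonneg (hc₀ i his) (not_lt.mp fun h => hiN (mem_filter.mpr ⟨his, h⟩))

end

section

variable {P : Type*} [Fintype P] [Nonempty P]

/-- The function maximized in `r*(-μ)`. -/
noncomputable def maxminObjective (lam : ℝ) (γ μ e : P → ℝ) : ℝ :=
  (univ.inf' univ_nonempty fun p => e p / γ p) + (∑ p, μ p * e p) / lam

theorem maxminObjective_self (lam : ℝ) {γ : P → ℝ} (hγ : ∀ p, 0 < γ p) (μ : P → ℝ) :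
    maxminObjective lam γ μ γ = (∑ p, μ p * γ p) / lam + 1 := by
  have hmin : (univ.inf' univ_nonempty fun p => γ p / γ p) = 1 := by
    simp only [fun p => div_self (hγ p).ne', inf'_const]
  rw [maxminObjective, hmin, add_comm]

theorem maxminObjective_le {lam : ℝ} (hlam : 0 < lam) {γ : P → ℝ} (hγ : ∀ p, 0 < γ p)
    {μ : P → ℝ} (hfeas : ∀ S : Finset P, -lam ≤ ∑ p ∈ S, γ p * μ p)
    {e : P → ℝ} (he : ∀ p, e p ≤ γ p) :
    maxminObjective lam γ μ e ≤ (∑ p, μ p * γ p) / lam + 1 := by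
  set m := univ.inf' univ_nonempty fun p => e p / γ p
  have hm_le : ∀ p, m ≤ e p / γ p := fun p => inf'_le _ (mem_univ p)
  have hm_one : m ≤ 1 :=
    (hm_le (Classical.arbitrary P)).trans ((div_le_one (hγ _)).mpr (he _))
  have hgap : -((1 - m) * lam) ≤ ∑ p, (γ p - e p) / γ p * (γ p * μ p) :=
    neg_mul_le_sum_mul_of_forall_subset_le_sum (sub_nonneg.mpr hm_one)
      (fun p _ => div_nonneg (sub_nonneg.mpr (he p)) (hγ p).le)
      (fun p _ => by rw [sub_div, div_self (hγ p).ne']; linarith [hm_le p])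
      (fun S _ => hfeas S)
  have hsum : ∑ p, (γ p - e p) / γ p * (γ p * μ p) = ∑ p, μ p * γ p - ∑ p, μ p * e p := by
    rw [← sum_sub_distrib]
    exact sum_congr rfl fun p _ => by field_simp [(hγ p).ne']
  have hdiv : (∑ p, μ p * e p) / lam ≤ (∑ p, μ p * γ p) / lam + (1 - m) := by
    rw [div_le_iff₀ hlam, add_mul, div_mul_cancel₀ _ hlam.ne']
    linarith
  rw [maxminObjective]
  linarith

end

/-- Closed form of the conjugate of the max-min regularizer on the feasible region:
if `∑_{p∈S} γ_p μ_p ≥ -λ` for every subset `S ⊆ P`, then the supremum defining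
`r*(-μ)` is attained at `e = γ` and `r*(-μ) = μᵀγ/λ + 1`. -/
theorem conjugate_maxmin_closed_form
    {P : Type*} [Fintype P] [Nonempty P]
    (lam : ℝ) (hlam : 0 < lam)
    (γ : P → ℝ) (hγ : ∀ p, 0 < γ p)
    (μ : P → ℝ)
    (hfeas : ∀ S : Finset P, -lam ≤ ∑ p ∈ S, γ p * μ p) :
    IsGreatest {w : ℝ | ∃ e : P → ℝ, (∀ p, e p ≤ γ p) ∧
        w = (Finset.univ.inf' Finset.univ_nonempty fun p => e p / γ p)
          + (∑ p, μ p * e p) / lam}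
      ((Finset.univ.inf' Finset.univ_nonempty fun p => γ p / γ p)
        + (∑ p, μ p * γ p) / lam)
    ∧ (Finset.univ.inf' Finset.univ_nonempty fun p => γ p / γ p)
        + (∑ p, μ p * γ p) / lam
      = (∑ p, μ p * γ p) / lam + 1 := by
  have hvalue : maxminObjective lam γ μ γ = (∑ p, μ p * γ p) / lam + 1 :=
    maxminObjective_self lam hγ μ
  refine ⟨⟨⟨γ, fun p => le_rfl, rfl⟩, ?_⟩, hvalue⟩
  rintro w ⟨e, he, rfl⟩
  change maxminObjective lam γ μ e ≤ maxminObjective lam γ μ γ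
  exact hvalue ▸ maxminObjective_le hlam hγ hfeas he
end

section
/- Vanishing of s* on the feasible region. Let v ∈ ℝ^P. If ∑_{p∈S} v_p ≥ −1 for every subset S ⊆ P, then s*(v) = 0, and the supremum is attained at z = 0; that is, min_{p∈P} z_p + vᵀz ≤ 0 for every z ∈ ℝ^P with all components nonpositive. -/
open Finset

private lemma sstar_aux
    {P : Type*} [Fintype P] [Nonempty P]
    (v : P → ℝ)
    (h : ∀ S : Finset P, -1 ≤ ∑ p ∈ S, v p) :
    ∀ n : ℕ, ∀ S : Finset P, ∀ z : P → ℝ, S.card ≤ n → (∀ p, z p ≤ 0) →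
      (∀ p ∉ S, z p = 0) →
      (Finset.univ.inf' Finset.univ_nonempty fun p => z p) + ∑ p, v p * z p ≤ 0 := by
  classical
  intro n
  induction n with
  | zero =>
    intro S z hcard hz hsupp
    have hS : S = ∅ := Finset.card_eq_zero.mp (Nat.le_zero.mp hcard)
    have hz0 : ∀ p, z p = 0 := fun p => hsupp p (by simp [hS])
    simp [hz0]
  | succ n ih =>
    intro S z hcard hz hsupp
    rcases S.eq_empty_or_nonempty with hS | hS
    · have hz0 : ∀ p, z p = 0 := fun p => hsupp p (by simp [hS])
      simp [hz0]
    · obtain ⟨p₀, hp₀S, hmax⟩ := S.exists_max_image z hS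
      set M := z p₀ with hM
      have hM0 : M ≤ 0 := hz p₀
      set z' : P → ℝ := fun p => if p ∈ S then z p - M else 0 with hz'
      have hz'le : ∀ p, z' p ≤ 0 := by
        intro p
        simp only [hz']
        split
        · next hp => linarith [hmax p hp]
        · exact le_refl 0
      have hz'supp : ∀ p ∉ S.erase p₀, z' p = 0 := by
        intro p hp
        by_cases hpS : p ∈ S
        · have hpe : p = p₀ := by
            by_contra hne
            exact hp (Finset.mem_erase.mpr ⟨hne, hpS⟩)
          simp [hz', hpS, hpe, hM, hp₀S]
        · simp [hz', hpS]
      -- inf over univ equals inf over S for z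
      have hinfS : ∀ (w : P → ℝ), (∀ p, w p ≤ 0) → (∀ p ∉ S, w p = 0) →
          (Finset.univ.inf' Finset.univ_nonempty fun p => w p) = S.inf' hS w := by
        intro w hw hwsupp
        apply le_antisymm
        · obtain ⟨q, hq, hqeq⟩ := S.exists_mem_eq_inf' hS w
          rw [hqeq]
          exact Finset.inf'_le _ (Finset.mem_univ q)
        · apply Finset.le_inf'
          intro b _
          by_cases hb : b ∈ S
          · exact Finset.inf'_le _ hb
          · rw [hwsupp b hb]
            calc S.inf' hS w ≤ w p₀ := Finset.inf'_le _ hp₀S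
              _ ≤ 0 := hw p₀
      have hinf_shift : S.inf' hS z' = S.inf' hS z - M := by
        apply le_antisymm
        · obtain ⟨q, hq, hqeq⟩ := S.exists_mem_eq_inf' hS z
          rw [hqeq]
          have : z' q = z q - M := by simp [hz', hq]
          rw [← this]
          exact Finset.inf'_le _ hq
        · apply Finset.le_inf'
          intro b hb
          have : z' b = z b - M := by simp [hz', hb]
          rw [this]
          have := Finset.inf'_le (f := z) hb
          linarith [Finset.inf'_le (f := z) hb]
      have hsum : ∑ p, v p * z p = (∑ p, v p * z' p) + (∑ p ∈ S, v p) * M := by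
        have hpt : ∀ p, v p * z p = v p * z' p + (if p ∈ S then v p * M else 0) := by
          intro p
          by_cases hp : p ∈ S
          · simp only [hz', hp, if_true]
            ring
          · simp [hz', hp, hsupp p hp]
        rw [Finset.sum_congr rfl (fun p _ => hpt p), Finset.sum_add_distrib,
          Finset.sum_ite_mem, Finset.univ_inter, Finset.sum_mul]
      have hcard' : (S.erase p₀).card ≤ n := by
        have := Finset.card_erase_of_mem hp₀S
        omega
      have hIH := ih (S.erase p₀) z' hcard' hz'le hz'supp
      have h1 : (Finset.univ.inf' Finset.univ_nonempty fun p => z p) = S.inf' hS z :=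
        hinfS z hz hsupp
      have h2 : (Finset.univ.inf' Finset.univ_nonempty fun p => z' p) = S.inf' hS z' :=
        hinfS z' hz'le (fun p hp => by simp [hz', hp])
      have hfeas := h S
      nlinarith [hIH, hinf_shift]

/-- Vanishing of `s*` on the feasible region: if `∑_{p∈S} v_p ≥ -1` for every subset
`S ⊆ P`, then `s*(v) = 0` and the supremum is attained at `z = 0`; i.e. `0` is the
greatest element of the set `{min_p z_p + vᵀz : z ≤ 0}`. -/
theorem sstar_zero_on_feasible_region
    {P : Type*} [Fintype P] [Nonempty P]
    (v : P → ℝ)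
    (h : ∀ S : Finset P, -1 ≤ ∑ p ∈ S, v p) :
    IsGreatest {w : ℝ | ∃ z : P → ℝ, (∀ p, z p ≤ 0) ∧
      w = (Finset.univ.inf' Finset.univ_nonempty fun p => z p) + ∑ p, v p * z p} 0 := by
  constructor
  · exact ⟨fun _ => 0, fun p => le_refl 0, by simp⟩
  · rintro w ⟨z, hz, rfl⟩
    exact sstar_aux v h (Finset.univ.card) Finset.univ z le_rfl hz (by simp)
end

section
/- Confidence-radius combination (deterministic core of Theorem 2). Let u*, û, i*, î ∈ ℝ^d and let A, C ∈ ℝ^{d×d} be symmetric positive definite. Then the polarization identity u*ᵀi* − ûᵀî = (1/2)[(u* + û)ᵀ(i* − î) + (u* − û)ᵀ(i* + î)] holds. Moreover, if ‖û − u*‖_A ≤ α, ‖î − i*‖_C ≤ β, ‖û − u*‖_{C⁻¹} ≤ c, and ‖î − i*‖_{A⁻¹} ≤ c for reals α, β, c ≥ 0, then u*ᵀi* − ûᵀî ≤ α·(c/2 + ‖î‖_{A⁻¹}) + β·(c/2 + ‖û‖_{C⁻¹}). -/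
open Matrix

lemma cs_weighted {d : ℕ} {B : Matrix (Fin d) (Fin d) ℝ} (hB : B.PosDef)
    (x y : Fin d → ℝ) :
    x ⬝ᵥ y ≤ Real.sqrt (x ⬝ᵥ B.mulVec x) * Real.sqrt (y ⬝ᵥ B⁻¹.mulVec y) := by
  have hBinv : B⁻¹.PosDef := hB.inv
  have hnn : ∀ v : Fin d → ℝ, 0 ≤ v ⬝ᵥ B.mulVec v := fun v => by
    rcases eq_or_ne v 0 with h | h
    · simp [h]
    · exact le_of_lt (hB.dotProduct_mulVec_pos h)
  set z := B⁻¹.mulVec y with hzdef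
  have hz : B.mulVec z = y := by
    rw [hzdef, mulVec_mulVec, Matrix.mul_nonsing_inv _ (isUnit_iff_ne_zero.mpr hB.det_pos.ne'),
      one_mulVec]
  have hBt : Bᵀ = B := by
    rw [← conjTranspose_eq_transpose_of_trivial]; exact hB.isHermitian
  have hsym : ∀ u v : Fin d → ℝ, u ⬝ᵥ B.mulVec v = v ⬝ᵥ B.mulVec u := fun u v => by
    rw [dotProduct_mulVec, ← mulVec_transpose, hBt, dotProduct_comm]
  set a := x ⬝ᵥ B.mulVec x with hadef
  set c' := y ⬝ᵥ B⁻¹.mulVec y with hcdef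
  set b := x ⬝ᵥ y with hbdef
  have ha : 0 ≤ a := hnn x
  have hc' : 0 ≤ c' := by
    rcases eq_or_ne y 0 with h | h
    · simp [hcdef, h]
    · exact le_of_lt (hBinv.dotProduct_mulVec_pos h)
  have hzz : z ⬝ᵥ B.mulVec z = c' := by rw [hz, hcdef, hzdef, dotProduct_comm]
  have hxz : x ⬝ᵥ B.mulVec z = b := by rw [hz]
  have hzx : z ⬝ᵥ B.mulVec x = b := by rw [hsym, hxz]
  have quad : ∀ t : ℝ, 0 ≤ a - 2 * t * b + t ^ 2 * c' := fun t => by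
    have h := hnn (x - t • z)
    simp only [mulVec_sub, mulVec_smul, dotProduct_sub, sub_dotProduct, dotProduct_smul,
      smul_dotProduct, smul_eq_mul, hadef.symm, hzz, hxz, hzx] at h
    nlinarith [h]
  have hsq : b ^ 2 ≤ a * c' := by
    rcases eq_or_lt_of_le hc' with h0 | hpos
    · have hy : y = 0 := by
        by_contra hy
        have h1 : 0 < c' := hBinv.dotProduct_mulVec_pos hy
        linarith
      have hb0 : b = 0 := by simp [hbdef, hy]
      nlinarith
    · have h := quad (b / c')
      have heq : a - 2 * (b / c') * b + (b / c') ^ 2 * c' = a - b ^ 2 / c' := by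
        field_simp; ring
      rw [heq] at h
      have h2 := mul_nonneg h hpos.le
      rw [sub_mul, div_mul_cancel₀ _ hpos.ne'] at h2
      linarith
  calc b ≤ |b| := le_abs_self b
    _ = Real.sqrt (b ^ 2) := (Real.sqrt_sq_eq_abs b).symm
    _ ≤ Real.sqrt (a * c') := Real.sqrt_le_sqrt hsq
    _ = Real.sqrt a * Real.sqrt c' := Real.sqrt_mul ha _

/-- Confidence-radius combination (deterministic core of Theorem 2): the polarization
identity `u*ᵀi* - ûᵀî = ½[(u*+û)ᵀ(i*-î) + (u*-û)ᵀ(i*+î)]`, and the resulting bound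
`u*ᵀi* - ûᵀî ≤ α(c/2 + ‖î‖_{A⁻¹}) + β(c/2 + ‖û‖_{C⁻¹})` under the stated
weighted-norm hypotheses. -/
theorem confidence_radius_combination
    {d : ℕ} (ustar uhat istar ihat : Fin d → ℝ)
    (A C : Matrix (Fin d) (Fin d) ℝ) (hA : A.PosDef) (hC : C.PosDef)
    (α β c : ℝ) (hα0 : 0 ≤ α) (hβ0 : 0 ≤ β) (hc0 : 0 ≤ c) :
    (ustar ⬝ᵥ istar - uhat ⬝ᵥ ihat
      = (1 / 2) * ((ustar + uhat) ⬝ᵥ (istar - ihat) + (ustar - uhat) ⬝ᵥ (istar + ihat)))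
    ∧ (Real.sqrt ((uhat - ustar) ⬝ᵥ A.mulVec (uhat - ustar)) ≤ α →
       Real.sqrt ((ihat - istar) ⬝ᵥ C.mulVec (ihat - istar)) ≤ β →
       Real.sqrt ((uhat - ustar) ⬝ᵥ C⁻¹.mulVec (uhat - ustar)) ≤ c →
       Real.sqrt ((ihat - istar) ⬝ᵥ A⁻¹.mulVec (ihat - istar)) ≤ c →
       ustar ⬝ᵥ istar - uhat ⬝ᵥ ihat
         ≤ α * (c / 2 + Real.sqrt (ihat ⬝ᵥ A⁻¹.mulVec ihat))
           + β * (c / 2 + Real.sqrt (uhat ⬝ᵥ C⁻¹.mulVec uhat))) := by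
  constructor
  · simp only [dotProduct_add, dotProduct_sub, add_dotProduct, sub_dotProduct]
    ring
  · intro h1 h2 h3 h4
    set e := uhat - ustar with he
    set f := ihat - istar with hf
    -- key identity
    have hid : ustar ⬝ᵥ istar - uhat ⬝ᵥ ihat
        = e ⬝ᵥ f - uhat ⬝ᵥ f - e ⬝ᵥ ihat := by
      simp only [he, hf, dotProduct_sub, sub_dotProduct]
      ring
    -- Cauchy-Schwarz bounds
    have sq1 : Real.sqrt (e ⬝ᵥ A.mulVec e) ≤ α := h1
    have sq2 : Real.sqrt (f ⬝ᵥ C.mulVec f) ≤ β := h2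
    have sq3 : Real.sqrt (e ⬝ᵥ C⁻¹.mulVec e) ≤ c := h3
    have sq4 : Real.sqrt (f ⬝ᵥ A⁻¹.mulVec f) ≤ c := h4
    have hef1 : e ⬝ᵥ f ≤ α * c := by
      calc e ⬝ᵥ f ≤ Real.sqrt (e ⬝ᵥ A.mulVec e) * Real.sqrt (f ⬝ᵥ A⁻¹.mulVec f) :=
            cs_weighted hA e f
        _ ≤ α * c := mul_le_mul sq1 sq4 (Real.sqrt_nonneg _) hα0
    have hef2 : e ⬝ᵥ f ≤ β * c := by
      calc e ⬝ᵥ f = f ⬝ᵥ e := dotProduct_comm e f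
        _ ≤ Real.sqrt (f ⬝ᵥ C.mulVec f) * Real.sqrt (e ⬝ᵥ C⁻¹.mulVec e) := cs_weighted hC f e
        _ ≤ β * c := mul_le_mul sq2 sq3 (Real.sqrt_nonneg _) hβ0
    have huf : -(uhat ⬝ᵥ f) ≤ β * Real.sqrt (uhat ⬝ᵥ C⁻¹.mulVec uhat) := by
      have := cs_weighted hC (-f) uhat
      have hneg : (-f) ⬝ᵥ C.mulVec (-f) = f ⬝ᵥ C.mulVec f := by
        simp [neg_dotProduct, mulVec_neg, dotProduct_neg]
      rw [hneg] at this
      calc -(uhat ⬝ᵥ f) = (-f) ⬝ᵥ uhat := by rw [neg_dotProduct, dotProduct_comm]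
        _ ≤ Real.sqrt (f ⬝ᵥ C.mulVec f) * Real.sqrt (uhat ⬝ᵥ C⁻¹.mulVec uhat) := this
        _ ≤ β * Real.sqrt (uhat ⬝ᵥ C⁻¹.mulVec uhat) :=
            mul_le_mul_of_nonneg_right sq2 (Real.sqrt_nonneg _)
    have hei : -(e ⬝ᵥ ihat) ≤ α * Real.sqrt (ihat ⬝ᵥ A⁻¹.mulVec ihat) := by
      have := cs_weighted hA (-e) ihat
      have hneg : (-e) ⬝ᵥ A.mulVec (-e) = e ⬝ᵥ A.mulVec e := by
        simp [neg_dotProduct, mulVec_neg, dotProduct_neg]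
      rw [hneg] at this
      calc -(e ⬝ᵥ ihat) = (-e) ⬝ᵥ ihat := by rw [neg_dotProduct]
        _ ≤ Real.sqrt (e ⬝ᵥ A.mulVec e) * Real.sqrt (ihat ⬝ᵥ A⁻¹.mulVec ihat) := this
        _ ≤ α * Real.sqrt (ihat ⬝ᵥ A⁻¹.mulVec ihat) :=
            mul_le_mul_of_nonneg_right sq1 (Real.sqrt_nonneg _)
    rw [hid]
    nlinarith [hef1, hef2, huf, hei]
end

section
/- Elliptical potential bound for cumulative inverse-weighted norms. Let λ ≥ 1, let x_1,…,x_T ∈ ℝ^d satisfy ‖x_t‖_2 ≤ 1 for all t, and define A_0 := λI and A_t := λI + ∑_{s=1}^t x_s x_sᵀ. Then ∑_{t=1}^T x_tᵀ A_{t−1}⁻¹ x_t ≤ 2d·ln(1 + T/(λd)), and consequently ∑_{t=1}^T √(x_tᵀ A_{t−1}⁻¹ x_t) ≤ √(2dT·ln(1 + T/(λd))). -/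
open Finset Matrix


section helpers
variable {d : ℕ}

lemma EPB.dot_nonneg (z : Fin d → ℝ) : 0 ≤ z ⬝ᵥ z :=
  Finset.sum_nonneg fun i _ => mul_self_nonneg _

lemma EPB.dot_pos {z : Fin d → ℝ} (hz : z ≠ 0) : 0 < z ⬝ᵥ z :=
  lt_of_le_of_ne (EPB.dot_nonneg z) fun h => hz (dotProduct_self_eq_zero.mp h.symm)

lemma EPB.vecMulVec_mulVec (w v z : Fin d → ℝ) :
    (vecMulVec w v) *ᵥ z = (v ⬝ᵥ z) • w := by
  ext i
  simp [mulVec, vecMulVec_apply, dotProduct, Finset.mul_sum, mul_comm, mul_assoc, mul_left_comm]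

lemma EPB.vecMulVec_isHermitian (w : Fin d → ℝ) : (vecMulVec w w).IsHermitian := by
  ext i j
  simp [conjTranspose_apply, vecMulVec_apply, mul_comm]

lemma EPB.quad (l : ℝ) (x : ℕ → Fin d → ℝ) (t : ℕ) (z : Fin d → ℝ) :
    z ⬝ᵥ (l • (1 : Matrix (Fin d) (Fin d) ℝ) + ∑ s ∈ Finset.Icc 1 t, vecMulVec (x s) (x s)) *ᵥ z
      = l * (z ⬝ᵥ z) + ∑ s ∈ Finset.Icc 1 t, (x s ⬝ᵥ z) ^ 2 := by
  rw [add_mulVec, dotProduct_add, smul_mulVec, one_mulVec, dotProduct_smul]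
  congr 1
  have hsum : (∑ s ∈ Finset.Icc 1 t, vecMulVec (x s) (x s)) *ᵥ z
      = ∑ s ∈ Finset.Icc 1 t, (vecMulVec (x s) (x s)) *ᵥ z :=
    map_sum (Matrix.mulVec.addMonoidHomLeft z) _ _
  have hdot : z ⬝ᵥ ∑ s ∈ Finset.Icc 1 t, (vecMulVec (x s) (x s)) *ᵥ z
      = ∑ s ∈ Finset.Icc 1 t, z ⬝ᵥ ((vecMulVec (x s) (x s)) *ᵥ z) := by
    simp [dotProduct, Finset.mul_sum, Finset.sum_apply]
    exact Finset.sum_comm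
  rw [hsum, hdot]
  refine Finset.sum_congr rfl fun s _ => ?_
  rw [EPB.vecMulVec_mulVec, dotProduct_smul, smul_eq_mul, dotProduct_comm, sq]

lemma EPB.posdef (hd : 0 < d) {l : ℝ} (hl : 0 < l) (x : ℕ → Fin d → ℝ) (t : ℕ) :
    (l • (1 : Matrix (Fin d) (Fin d) ℝ) + ∑ s ∈ Finset.Icc 1 t, vecMulVec (x s) (x s)).PosDef := by
  refine Matrix.PosDef.of_dotProduct_mulVec_pos ?_ ?_
  · apply Matrix.IsHermitian.add
    · show _ = _
      rw [conjTranspose_smul, conjTranspose_one, star_trivial]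
    · exact Finset.sum_induction _ Matrix.IsHermitian (fun a b ha hb => ha.add hb)
        Matrix.isHermitian_zero (fun s _ => EPB.vecMulVec_isHermitian (x s))
  · intro z hz
    rw [star_trivial, EPB.quad]
    have h1 : 0 < l * (z ⬝ᵥ z) := mul_pos hl (EPB.dot_pos hz)
    have h2 : 0 ≤ ∑ s ∈ Finset.Icc 1 t, (x s ⬝ᵥ z) ^ 2 :=
      Finset.sum_nonneg fun s _ => sq_nonneg _
    linarith

lemma EPB.inv_quad_le {M : Matrix (Fin d) (Fin d) ℝ} (hM : M.PosDef) {c : ℝ} (hc : 0 < c)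
    (h : ∀ z, c * (z ⬝ᵥ z) ≤ z ⬝ᵥ M *ᵥ z) (y : Fin d → ℝ) :
    y ⬝ᵥ M⁻¹ *ᵥ y ≤ (y ⬝ᵥ y) / c := by
  set z := M⁻¹ *ᵥ y with hzdef
  have hy : M *ᵥ z = y := by
    rw [hzdef, mulVec_mulVec, Matrix.mul_nonsing_inv _ hM.det_pos.ne'.isUnit, one_mulVec]
  have hu0 : 0 ≤ y ⬝ᵥ z := by
    have := hM.inv.posSemidef.dotProduct_mulVec_nonneg y
    rwa [star_trivial] at this
  have hb : 0 ≤ y ⬝ᵥ y := EPB.dot_nonneg y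
  rcases eq_or_lt_of_le hu0 with heq | hpos
  · rw [← heq]; positivity
  · have hca : c * (z ⬝ᵥ z) ≤ y ⬝ᵥ z := by
      have := h z
      rw [hy] at this
      rwa [dotProduct_comm y z]
    have hcs : (z ⬝ᵥ y) ^ 2 ≤ (z ⬝ᵥ z) * (y ⬝ᵥ y) := by
      simpa [dotProduct, sq] using
        Finset.sum_mul_sq_le_sq_mul_sq Finset.univ z y
    rw [dotProduct_comm z y] at hcs
    rw [le_div_iff₀ hc]
    nlinarith [mul_le_mul_of_nonneg_right hca hb, mul_le_mul_of_nonneg_left hcs hc.le, hpos]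

lemma EPB.le_two_log {u : ℝ} (h0 : 0 ≤ u) (h1 : u ≤ 1) : u ≤ 2 * Real.log (1 + u) := by
  have hpos : (0:ℝ) < 1 + u := by linarith
  have h : Real.log (1 + u)⁻¹ ≤ (1 + u)⁻¹ - 1 :=
    Real.log_le_sub_one_of_pos (by positivity)
  rw [Real.log_inv] at h
  have h2 : (1 + u) * (1 + u)⁻¹ = 1 := mul_inv_cancel₀ hpos.ne'
  nlinarith [h, h2, mul_nonneg h0 (sub_nonneg.mpr h1)]

lemma EPB.trace_eq_sum_eigenvalues {M : Matrix (Fin d) (Fin d) ℝ} (hM : M.IsHermitian) :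
    M.trace = ∑ i, hM.eigenvalues i := by
  simpa using hM.trace_eq_sum_eigenvalues

lemma EPB.det_le_pow (hd : 0 < d) {M : Matrix (Fin d) (Fin d) ℝ} (hM : M.PosDef)
    {s : ℝ} (hs : M.trace ≤ s) : M.det ≤ (s / d) ^ d := by
  have hdr : (0:ℝ) < d := Nat.cast_pos.mpr hd
  set μ := hM.isHermitian.eigenvalues with hμ
  have hμpos : ∀ i, 0 < μ i := hM.eigenvalues_pos
  have hdet : M.det = ∏ i, μ i := by
    have := hM.isHermitian.det_eq_prod_eigenvalues
    simpa using this
  have htr : ∑ i, μ i = M.trace := (EPB.trace_eq_sum_eigenvalues hM.isHermitian).symm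
  have hgm : ∏ i, μ i ^ ((d:ℝ)⁻¹) ≤ ∑ i, ((d:ℝ)⁻¹) * μ i := by
    apply Real.geom_mean_le_arith_mean_weighted
    · intro i _; positivity
    · simp [Finset.card_univ]
      field_simp
    · intro i _; exact (hμpos i).le
  have hsum : ∑ i, ((d:ℝ)⁻¹) * μ i ≤ s / d := by
    rw [← Finset.mul_sum, htr]
    rw [div_eq_inv_mul]
    exact mul_le_mul_of_nonneg_left hs (by positivity)
  have hprod_nonneg : 0 ≤ ∏ i, μ i ^ ((d:ℝ)⁻¹) :=
    Finset.prod_nonneg fun i _ => Real.rpow_nonneg (hμpos i).le _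
  have key : (∏ i, μ i ^ ((d:ℝ)⁻¹)) ^ d = ∏ i, μ i := by
    rw [← Finset.prod_pow]
    refine Finset.prod_congr rfl fun i _ => ?_
    rw [← Real.rpow_natCast (μ i ^ ((d:ℝ)⁻¹)) d, ← Real.rpow_mul (hμpos i).le,
      inv_mul_cancel₀ hdr.ne', Real.rpow_one]
  calc M.det = (∏ i, μ i ^ ((d:ℝ)⁻¹)) ^ d := by rw [key, hdet]
    _ ≤ (s / d) ^ d := pow_le_pow_left₀ hprod_nonneg (hgm.trans hsum) d

lemma EPB.det_step {M : Matrix (Fin d) (Fin d) ℝ} (hM : M.PosDef) (v : Fin d → ℝ) :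
    (M + vecMulVec v v).det = M.det * (1 + v ⬝ᵥ M⁻¹ *ᵥ v) := by
  rw [vecMulVec_eq Unit, det_add_replicateCol_mul_replicateRow hM.det_pos.ne'.isUnit]
  congr 1
  rw [Matrix.mul_assoc, ← replicateCol_mulVec, det_unique]
  simp [replicateRow_mul_replicateCol_apply]
end helpers


/-- Elliptical potential bound for cumulative inverse-weighted norms:
for `λ ≥ 1`, `‖x_t‖₂ ≤ 1`, and `A_t = λI + ∑_{s=1}^t x_s x_sᵀ`,
`∑_{t=1}^T x_tᵀ A_{t-1}⁻¹ x_t ≤ 2d ln(1 + T/(λd))`, and consequently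
`∑_{t=1}^T √(x_tᵀ A_{t-1}⁻¹ x_t) ≤ √(2dT ln(1 + T/(λd)))`. -/
theorem elliptical_potential_bound
    {d : ℕ} (hd : 0 < d) (l : ℝ) (hl : 1 ≤ l)
    (T : ℕ) (x : ℕ → Fin d → ℝ)
    (hx : ∀ t, 1 ≤ t → t ≤ T → Real.sqrt (x t ⬝ᵥ x t) ≤ 1)
    (A : ℕ → Matrix (Fin d) (Fin d) ℝ)
    (hA : ∀ t : ℕ, A t = l • (1 : Matrix (Fin d) (Fin d) ℝ)
      + ∑ s ∈ Finset.Icc 1 t, Matrix.vecMulVec (x s) (x s)) :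
    (∑ t ∈ Finset.Icc 1 T, x t ⬝ᵥ (A (t - 1))⁻¹.mulVec (x t)
        ≤ 2 * (d : ℝ) * Real.log (1 + (T : ℝ) / (l * d)))
    ∧ ∑ t ∈ Finset.Icc 1 T, Real.sqrt (x t ⬝ᵥ (A (t - 1))⁻¹.mulVec (x t))
        ≤ Real.sqrt (2 * (d : ℝ) * T * Real.log (1 + (T : ℝ) / (l * d))) := by
  have hl0 : (0:ℝ) < l := lt_of_lt_of_le one_pos hl
  have hdr : (0:ℝ) < d := Nat.cast_pos.mpr hd
  set u : ℕ → ℝ := fun t => x t ⬝ᵥ (A (t - 1))⁻¹.mulVec (x t) with hu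
  have hpos : ∀ t, (A t).PosDef := fun t => hA t ▸ EPB.posdef hd hl0 x t
  have hquad : ∀ t z, l * (z ⬝ᵥ z) ≤ z ⬝ᵥ (A t) *ᵥ z := by
    intro t z
    rw [hA t, EPB.quad]
    have : 0 ≤ ∑ s ∈ Finset.Icc 1 t, (x s ⬝ᵥ z) ^ 2 :=
      Finset.sum_nonneg fun s _ => sq_nonneg _
    linarith
  have hu0 : ∀ t, 0 ≤ u t := by
    intro t
    have := (hpos (t - 1)).inv.posSemidef.dotProduct_mulVec_nonneg (x t)
    rwa [star_trivial] at this
  have hu1 : ∀ t ∈ Finset.Icc 1 T, u t ≤ 1 := by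
    intro t ht
    rw [Finset.mem_Icc] at ht
    have hxx : x t ⬝ᵥ x t ≤ 1 := by
      have h := hx t ht.1 ht.2
      have h2 := Real.sq_sqrt (EPB.dot_nonneg (x t))
      nlinarith [Real.sqrt_nonneg (x t ⬝ᵥ x t)]
    have hle := EPB.inv_quad_le (hpos (t - 1)) hl0 (fun z => hquad (t - 1) z) (x t)
    calc u t ≤ (x t ⬝ᵥ x t) / l := hle
      _ ≤ 1 := (div_le_one hl0).mpr (hxx.trans hl)
  have hdet : ∀ n : ℕ, (A (n + 1)).det = (A n).det * (1 + u (n + 1)) := by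
    intro n
    have hstep : A (n + 1) = A n + vecMulVec (x (n + 1)) (x (n + 1)) := by
      rw [hA, hA, Finset.sum_Icc_succ_top (Nat.le_add_left 1 n), add_assoc]
    rw [hstep, EPB.det_step (hpos n)]
    congr 2
  have hdetpos : ∀ n, 0 < (A n).det := fun n => (hpos n).det_pos
  have tele : ∀ N : ℕ, ∑ t ∈ Finset.Icc 1 N, Real.log (1 + u t)
      = Real.log ((A N).det) - Real.log ((A 0).det) := by
    intro N
    induction N with
    | zero => simp
    | succ n ih =>
      have hne : (0:ℝ) < 1 + u (n + 1) := by linarith [hu0 (n + 1)]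
      rw [Finset.sum_Icc_succ_top (Nat.le_add_left 1 n), ih, hdet n,
        Real.log_mul (hdetpos n).ne' hne.ne']
      ring
  have htrsum : (A T).trace ≤ l * d + T := by
    rw [hA T, trace_add, trace_smul, trace_one]
    have h1 : (∑ s ∈ Finset.Icc 1 T, vecMulVec (x s) (x s)).trace
        = ∑ s ∈ Finset.Icc 1 T, x s ⬝ᵥ x s := by
      rw [trace_sum]
      refine Finset.sum_congr rfl fun s _ => ?_
      simp [Matrix.trace, Matrix.diag, vecMulVec_apply, dotProduct]
    have h2 : ∑ s ∈ Finset.Icc 1 T, x s ⬝ᵥ x s ≤ (T:ℝ) := by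
      have hc : (Finset.Icc 1 T).card = T := by simp
      calc ∑ s ∈ Finset.Icc 1 T, x s ⬝ᵥ x s ≤ ∑ s ∈ Finset.Icc 1 T, (1:ℝ) := by
            refine Finset.sum_le_sum fun s hs => ?_
            rw [Finset.mem_Icc] at hs
            have h := hx s hs.1 hs.2
            have h2 := Real.sq_sqrt (EPB.dot_nonneg (x s))
            nlinarith [Real.sqrt_nonneg (x s ⬝ᵥ x s)]
        _ = (T:ℝ) := by rw [Finset.sum_const, hc]; simp
    rw [h1]
    simp only [Fintype.card_fin, smul_eq_mul]
    linarith
  have hdetT : (A T).det ≤ ((l * d + T) / d) ^ d := EPB.det_le_pow hd (hpos T) htrsum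
  have hdet0 : (A 0).det = l ^ d := by
    rw [hA 0]
    simp only [Finset.Icc_self, Nat.lt_irrefl, Finset.Icc_eq_empty_of_lt (Nat.lt_one_iff.mpr rfl),
      Finset.sum_empty, add_zero]
    rw [Matrix.det_smul, det_one, Fintype.card_fin, mul_one]
  have hsd : (0:ℝ) < (l * d + T) / d := by positivity
  have hlog : Real.log ((A T).det) - Real.log ((A 0).det)
      ≤ (d:ℝ) * Real.log (1 + (T:ℝ) / (l * d)) := by
    have h1 : Real.log ((A T).det) ≤ (d:ℝ) * Real.log ((l * d + T) / d) := by
      calc Real.log ((A T).det) ≤ Real.log (((l * d + T) / d) ^ d) :=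
            Real.log_le_log (hdetpos T) hdetT
        _ = (d:ℝ) * Real.log ((l * d + T) / d) := by rw [Real.log_pow]
    have h2 : Real.log ((A 0).det) = (d:ℝ) * Real.log l := by rw [hdet0, Real.log_pow]
    have h3 : Real.log ((l * d + T) / d) - Real.log l = Real.log (1 + (T:ℝ) / (l * d)) := by
      rw [← Real.log_div hsd.ne' hl0.ne']
      congr 1
      rw [div_div, mul_comm (d:ℝ) l, add_div, div_self (by positivity : l * (d:ℝ) ≠ 0)]
    have h4 : (d:ℝ) * Real.log (1 + (T:ℝ) / (l * d))
        = (d:ℝ) * Real.log ((l * d + T) / d) - (d:ℝ) * Real.log l := by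
      rw [← h3]; ring
    linarith
  have part1 : ∑ t ∈ Finset.Icc 1 T, u t ≤ 2 * (d:ℝ) * Real.log (1 + (T:ℝ) / (l * d)) := by
    calc ∑ t ∈ Finset.Icc 1 T, u t ≤ ∑ t ∈ Finset.Icc 1 T, 2 * Real.log (1 + u t) :=
          Finset.sum_le_sum fun t ht => EPB.le_two_log (hu0 t) (hu1 t ht)
      _ = 2 * (Real.log ((A T).det) - Real.log ((A 0).det)) := by
          rw [← Finset.mul_sum, tele T]
      _ ≤ 2 * ((d:ℝ) * Real.log (1 + (T:ℝ) / (l * d))) := by linarith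
      _ = 2 * (d:ℝ) * Real.log (1 + (T:ℝ) / (l * d)) := by ring
  refine ⟨part1, ?_⟩
  have h0 : 0 ≤ ∑ t ∈ Finset.Icc 1 T, Real.sqrt (u t) :=
    Finset.sum_nonneg fun t _ => Real.sqrt_nonneg _
  have cs : (∑ t ∈ Finset.Icc 1 T, Real.sqrt (u t)) ^ 2
      ≤ (T:ℝ) * ∑ t ∈ Finset.Icc 1 T, u t := by
    have hCS := Finset.sum_mul_sq_le_sq_mul_sq (Finset.Icc 1 T)
      (fun _ => (1:ℝ)) (fun t => Real.sqrt (u t))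
    have e1 : ∑ t ∈ Finset.Icc 1 T, (1:ℝ) * Real.sqrt (u t)
        = ∑ t ∈ Finset.Icc 1 T, Real.sqrt (u t) := by simp
    have e2 : ∑ _t ∈ Finset.Icc 1 T, (1:ℝ) ^ 2 = (T:ℝ) := by
      rw [Finset.sum_const]
      simp
    have e3 : ∑ t ∈ Finset.Icc 1 T, Real.sqrt (u t) ^ 2 = ∑ t ∈ Finset.Icc 1 T, u t :=
      Finset.sum_congr rfl fun t _ => Real.sq_sqrt (hu0 t)
    rw [e1, e2, e3] at hCS
    exact hCS
  have hfinal : (∑ t ∈ Finset.Icc 1 T, Real.sqrt (u t)) ^ 2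
      ≤ 2 * (d:ℝ) * T * Real.log (1 + (T:ℝ) / (l * d)) := by
    calc (∑ t ∈ Finset.Icc 1 T, Real.sqrt (u t)) ^ 2
        ≤ (T:ℝ) * ∑ t ∈ Finset.Icc 1 T, u t := cs
      _ ≤ (T:ℝ) * (2 * (d:ℝ) * Real.log (1 + (T:ℝ) / (l * d))) :=
          mul_le_mul_of_nonneg_left part1 (Nat.cast_nonneg T)
      _ = 2 * (d:ℝ) * T * Real.log (1 + (T:ℝ) / (l * d)) := by ring
  calc ∑ t ∈ Finset.Icc 1 T, Real.sqrt (u t)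
      = Real.sqrt ((∑ t ∈ Finset.Icc 1 T, Real.sqrt (u t)) ^ 2) := (Real.sqrt_sq h0).symm
    _ ≤ Real.sqrt (2 * (d:ℝ) * T * Real.log (1 + (T:ℝ) / (l * d))) :=
        Real.sqrt_le_sqrt hfinal
end
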